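/- 2·∫_0^{π/4} log(tan θ) dθ = 5·∫_0^{3π/20} log(tan θ) dθ - 5·∫_0^{π/20} log(tan θ) dθ. -/

import Mathlib

/-!
Write `F a = ∫₀ᵃ log tan`. The identity
`tan 5θ = tan θ · tan (π/5 + θ) tan (π/5 - θ) · tan (2π/5 + θ) tan (2π/5 - θ)`
integrated over `[0, π/20]` gives, after the substitutions `θ ↦ 5θ` and `θ ↦ c ± θ`,
`F (π/4) / 5 = F (π/20) + F (π/4) - F (3π/20) + F (9π/20) - F (7π/20)`.
Since `log tan (π/2 - θ) = - log tan θ` and `F (π/2) = 0`, we have `F (π/2 - a) = F a`,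
so `F (9π/20) - F (7π/20) = F (π/20) - F (3π/20)`, and the theorem follows.
-/

open Real intervalIntegral

namespace Real

/-- Holds for every `x`: where `sin x` or `cos x` vanishes, both sides are `0`. -/
theorem log_tan_eq_log_sin_sub_log_cos (x : ℝ) : log (tan x) = log (sin x) - log (cos x) := by
  have hsc := sin_sq_add_cos_sq x
  rw [tan_eq_sin_div_cos]
  by_cases hs : sin x = 0
  · have hc : cos x = 1 ∨ cos x = -1 := sq_eq_one_iff.mp (by simpa [hs] using hsc)
    rcases hc with hc | hc <;> simp [hs, hc]
  by_cases hc : cos x = 0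
  · have hs' : sin x = 1 ∨ sin x = -1 := sq_eq_one_iff.mp (by simpa [hc] using hsc)
    rcases hs' with hs' | hs' <;> simp [hs', hc]
  exact log_div hs hc

theorem log_tan_pi_div_two_sub (x : ℝ) : log (tan (π / 2 - x)) = -log (tan x) := by
  rw [tan_pi_div_two_sub, log_inv]

theorem intervalIntegrable_log_tan (a b : ℝ) :
    IntervalIntegrable (fun x ↦ log (tan x)) MeasureTheory.volume a b := by
  simpa only [log_tan_eq_log_sin_sub_log_cos, Function.comp_apply] using
    intervalIntegrable_log_sin.sub intervalIntegrable_log_cos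

theorem intervalIntegrable_log_tan_add (c a b : ℝ) :
    IntervalIntegrable (fun x ↦ log (tan (c + x))) MeasureTheory.volume a b := by
  simpa using (intervalIntegrable_log_tan (c + a) (c + b)).comp_add_left c

theorem intervalIntegrable_log_tan_sub (c a b : ℝ) :
    IntervalIntegrable (fun x ↦ log (tan (c - x))) MeasureTheory.volume a b := by
  simpa using (intervalIntegrable_log_tan (c - a) (c - b)).comp_sub_left c

theorem sin_add_mul_sin_sub (a b : ℝ) : sin (a + b) * sin (a - b) = sin a ^ 2 - sin b ^ 2 := by
  rw [sin_add, sin_sub]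
  linear_combination sin a ^ 2 * sin_sq_add_cos_sq b - sin b ^ 2 * sin_sq_add_cos_sq a

theorem cos_add_mul_cos_sub (a b : ℝ) : cos (a + b) * cos (a - b) = cos a ^ 2 - sin b ^ 2 := by
  rw [cos_add, cos_sub]
  linear_combination cos a ^ 2 * sin_sq_add_cos_sq b - sin b ^ 2 * sin_sq_add_cos_sq a

theorem cos_sq_pi_div_five : cos (π / 5) ^ 2 = (3 + √5) / 8 := by
  rw [cos_pi_div_five]
  linear_combination (1 / 16) * sq_sqrt (by norm_num : (0 : ℝ) ≤ 5)

theorem sin_sq_pi_div_five : sin (π / 5) ^ 2 = (5 - √5) / 8 := by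
  linear_combination sin_sq_add_cos_sq (π / 5) - cos_sq_pi_div_five

theorem cos_sq_two_pi_div_five : cos (2 * π / 5) ^ 2 = (3 - √5) / 8 := by
  rw [mul_div_assoc, cos_two_mul, cos_sq_pi_div_five]
  linear_combination (1 / 16) * sq_sqrt (by norm_num : (0 : ℝ) ≤ 5)

theorem sin_sq_two_pi_div_five : sin (2 * π / 5) ^ 2 = (5 + √5) / 8 := by
  linear_combination sin_sq_add_cos_sq (2 * π / 5) - cos_sq_two_pi_div_five

/-- The roots of `sin 5θ` as a polynomial in `sin θ` are `0`, `± sin (π/5)` and `± sin (2π/5)`. -/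
theorem sin_five_mul (θ : ℝ) :
    sin (5 * θ) = 16 * sin θ * (sin (π / 5 + θ) * sin (π / 5 - θ)) *
      (sin (2 * π / 5 + θ) * sin (2 * π / 5 - θ)) := by
  rw [sin_add_mul_sin_sub, sin_add_mul_sin_sub, sin_sq_pi_div_five, sin_sq_two_pi_div_five,
    show 5 * θ = θ + θ + θ + θ + θ by ring]
  simp only [sin_add, cos_add]
  linear_combination (5 * sin θ * cos θ ^ 2 - 15 * sin θ ^ 3 + 5 * sin θ) * sin_sq_add_cos_sq θ
    + (sin θ / 4) * sq_sqrt (by norm_num : (0 : ℝ) ≤ 5)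

theorem cos_five_mul (θ : ℝ) :
    cos (5 * θ) = 16 * cos θ * (cos (π / 5 + θ) * cos (π / 5 - θ)) *
      (cos (2 * π / 5 + θ) * cos (2 * π / 5 - θ)) := by
  rw [cos_add_mul_cos_sub, cos_add_mul_cos_sub, cos_sq_pi_div_five, cos_sq_two_pi_div_five,
    show 5 * θ = θ + θ + θ + θ + θ by ring]
  simp only [sin_add, cos_add]
  linear_combination (-11 * cos θ * sin θ ^ 2 + cos θ ^ 3 + cos θ) * sin_sq_add_cos_sq θ
    + (cos θ / 4) * sq_sqrt (by norm_num : (0 : ℝ) ≤ 5)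

theorem tan_five_mul (θ : ℝ) :
    tan (5 * θ) = tan θ * (tan (π / 5 + θ) * tan (π / 5 - θ)) *
      (tan (2 * π / 5 + θ) * tan (2 * π / 5 - θ)) := by
  simp only [tan_eq_sin_div_cos]
  rw [sin_five_mul, cos_five_mul]
  ring

theorem log_tan_five_mul {θ : ℝ} (h₀ : 0 < θ) (h₁ : θ < π / 10) :
    log (tan (5 * θ)) = log (tan θ) + (log (tan (π / 5 + θ)) + log (tan (π / 5 - θ))) +
      (log (tan (2 * π / 5 + θ)) + log (tan (2 * π / 5 - θ))) := by
  have hpos : ∀ x, 0 < x → x < π / 2 → 0 < tan x := fun _ ↦ tan_pos_of_pos_of_lt_pi_div_two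
  have hπ := pi_pos
  have t₀ := hpos θ h₀ (by linarith)
  have t₁ := hpos (π / 5 + θ) (by linarith) (by linarith)
  have t₂ := hpos (π / 5 - θ) (by linarith) (by linarith)
  have t₃ := hpos (2 * π / 5 + θ) (by linarith) (by linarith)
  have t₄ := hpos (2 * π / 5 - θ) (by linarith) (by linarith)
  rw [tan_five_mul, log_mul (mul_pos t₀ (mul_pos t₁ t₂)).ne' (mul_pos t₃ t₄).ne',
    log_mul t₀.ne' (mul_pos t₁ t₂).ne', log_mul t₁.ne' t₂.ne', log_mul t₃.ne' t₄.ne']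

end Real

noncomputable def logTanIntegral (a : ℝ) : ℝ := ∫ x in (0 : ℝ)..a, log (tan x)

theorem integral_log_tan_eq_sub (a b : ℝ) :
    ∫ x in a..b, log (tan x) = logTanIntegral b - logTanIntegral a :=
  (integral_interval_sub_left (intervalIntegrable_log_tan 0 b)
    (intervalIntegrable_log_tan 0 a)).symm

theorem integral_log_tan_comp_add_left (a c : ℝ) :
    ∫ θ in (0 : ℝ)..c, log (tan (a + θ)) = logTanIntegral (a + c) - logTanIntegral a := by
  rw [intervalIntegral.integral_comp_add_left (fun x ↦ log (tan x)), add_zero,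
    integral_log_tan_eq_sub]

theorem integral_log_tan_comp_sub_left (a c : ℝ) :
    ∫ θ in (0 : ℝ)..c, log (tan (a - θ)) = logTanIntegral a - logTanIntegral (a - c) := by
  rw [intervalIntegral.integral_comp_sub_left (fun x ↦ log (tan x)), sub_zero,
    integral_log_tan_eq_sub]

theorem integral_log_tan_comp_mul_left {k : ℝ} (hk : k ≠ 0) (c : ℝ) :
    ∫ θ in (0 : ℝ)..c, log (tan (k * θ)) = k⁻¹ * logTanIntegral (k * c) := by
  rw [intervalIntegral.integral_comp_mul_left (fun x ↦ log (tan x)) hk, mul_zero, smul_eq_mul,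
    logTanIntegral]

theorem logTanIntegral_zero : logTanIntegral 0 = 0 := integral_same

theorem logTanIntegral_pi_div_two_sub_eq (a : ℝ) :
    logTanIntegral (π / 2 - a) = logTanIntegral a - logTanIntegral (π / 2) := by
  calc logTanIntegral (π / 2 - a) = ∫ x in a..π / 2, log (tan (π / 2 - x)) := by
        rw [intervalIntegral.integral_comp_sub_left (fun x ↦ log (tan x)), sub_self,
          logTanIntegral]
    _ = -∫ x in a..π / 2, log (tan x) := by simp only [log_tan_pi_div_two_sub, integral_neg]
    _ = logTanIntegral a - logTanIntegral (π / 2) := by rw [integral_log_tan_eq_sub]; ring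

theorem logTanIntegral_pi_div_two : logTanIntegral (π / 2) = 0 := by
  have h := logTanIntegral_pi_div_two_sub_eq 0
  rw [sub_zero, logTanIntegral_zero] at h
  linarith

theorem logTanIntegral_pi_div_two_sub (a : ℝ) :
    logTanIntegral (π / 2 - a) = logTanIntegral a := by
  rw [logTanIntegral_pi_div_two_sub_eq, logTanIntegral_pi_div_two, sub_zero]

theorem logTanIntegral_pi_div_four :
    5⁻¹ * logTanIntegral (π / 4) = logTanIntegral (π / 20) +
      (logTanIntegral (π / 4) - logTanIntegral (3 * π / 20)) +
      (logTanIntegral (9 * π / 20) - logTanIntegral (7 * π / 20)) := by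
  have h₀ := intervalIntegrable_log_tan 0 (π / 20)
  have h₁ := intervalIntegrable_log_tan_add (π / 5) 0 (π / 20)
  have h₂ := intervalIntegrable_log_tan_sub (π / 5) 0 (π / 20)
  have h₃ := intervalIntegrable_log_tan_add (2 * π / 5) 0 (π / 20)
  have h₄ := intervalIntegrable_log_tan_sub (2 * π / 5) 0 (π / 20)
  calc 5⁻¹ * logTanIntegral (π / 4) = ∫ θ in (0 : ℝ)..π / 20, log (tan (5 * θ)) := by
        rw [integral_log_tan_comp_mul_left (by norm_num)]; ring_nf
    _ = ∫ θ in (0 : ℝ)..π / 20, (log (tan θ) +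
          (log (tan (π / 5 + θ)) + log (tan (π / 5 - θ))) +
          (log (tan (2 * π / 5 + θ)) + log (tan (2 * π / 5 - θ)))) := by
        refine integral_congr_ae (Filter.Eventually.of_forall fun θ hθ ↦ ?_)
        rw [Set.uIoc_of_le (by positivity)] at hθ
        exact log_tan_five_mul hθ.1 (by linarith [hθ.2, pi_pos])
    _ = _ := by
        rw [integral_add (h₀.add (h₁.add h₂)) (h₃.add h₄), integral_add h₀ (h₁.add h₂),
          integral_add h₁ h₂, integral_add h₃ h₄, ← logTanIntegral.eq_1,
          integral_log_tan_comp_add_left,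
          integral_log_tan_comp_add_left, integral_log_tan_comp_sub_left,
          integral_log_tan_comp_sub_left]
        ring_nf

theorem stmt9 :
    2 * ∫ θ in (0:ℝ)..(π / 4), Real.log (Real.tan θ) =
      5 * (∫ θ in (0:ℝ)..(3 * π / 20), Real.log (Real.tan θ)) -
      5 * ∫ θ in (0:ℝ)..(π / 20), Real.log (Real.tan θ) := by
  show 2 * logTanIntegral (π / 4) = 5 * logTanIntegral (3 * π / 20) - 5 * logTanIntegral (π / 20)
  have h := logTanIntegral_pi_div_four
  rw [show 9 * π / 20 = π / 2 - π / 20 by ring, show 7 * π / 20 = π / 2 - 3 * π / 20 by ring,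
    logTanIntegral_pi_div_two_sub, logTanIntegral_pi_div_two_sub] at h
  linarith
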